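/- arXiv:1404.5738 — 2 statements merged into one kernel-verified Lean document; each statement's English description precedes it below -/
import Mathlib

section
/- For k = 2 and q ≥ 2, a vector of the form (z,…,z,1,…,1) with m coordinates equal to z > 0 (1 ≤ m ≤ q−1) solves z_i = (((θ−1)z_i + ∑_j z_j + 1)/(θ + ∑_j z_j))² if and only if z = 1 or √z is a root of m x² − (θ−1)x + (q−m) = 0. -/
theorem potts_k2_solutions (q m : ℕ) (hq : 2 ≤ q) (hm1 : 1 ≤ m) (hm2 : m ≤ q - 1)
    (θ : ℝ) (hθ : 1 < θ) (z : ℝ) (hz : 0 < z) :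
    (∀ i : Fin (q - 1),
        (if (i : ℕ) < m then z else 1) =
          (((θ - 1) * (if (i : ℕ) < m then z else 1) +
              (∑ j : Fin (q - 1), if (j : ℕ) < m then z else 1) + 1) /
            (θ + ∑ j : Fin (q - 1), if (j : ℕ) < m then z else 1)) ^ 2) ↔
    (z = 1 ∨
      (m : ℝ) * Real.sqrt z ^ 2 - (θ - 1) * Real.sqrt z + ((q : ℝ) - (m : ℝ)) = 0) := by
  have h1q : 1 ≤ q := le_trans one_le_two hq
  set s := Real.sqrt z with hs
  have hs0 : 0 < s := Real.sqrt_pos.mpr hz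
  have hsz : s ^ 2 = z := Real.sq_sqrt hz.le
  have hmc : (m : ℝ) ≤ (q : ℝ) - 1 := by
    have := (Nat.cast_le (α := ℝ)).mpr hm2
    rwa [Nat.cast_sub h1q, Nat.cast_one] at this
  have hSum : (∑ j : Fin (q - 1), if (j : ℕ) < m then z else 1)
      = m * z + ((q : ℝ) - 1 - m) := by
    rw [Fin.sum_univ_eq_sum_range (fun j => if j < m then z else (1:ℝ)) (q-1), Finset.range_eq_Ico,
      ← Finset.sum_Ico_consecutive _ (Nat.zero_le m) hm2]
    have e1 : ∑ j ∈ Finset.Ico 0 m, (if j < m then z else (1:ℝ)) = m * z := by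
      rw [Finset.sum_congr rfl fun j hj => if_pos (Finset.mem_Ico.mp hj).2]
      simp [mul_comm]
    have e2 : ∑ j ∈ Finset.Ico m (q-1), (if j < m then z else (1:ℝ))
        = ((q:ℝ)-1-m) := by
      rw [Finset.sum_congr rfl fun j hj => if_neg (not_lt.mpr (Finset.mem_Ico.mp hj).1)]
      rw [Finset.sum_const, Nat.card_Ico, nsmul_eq_mul, mul_one,
        Nat.cast_sub hm2, Nat.cast_sub h1q, Nat.cast_one]
    rw [e1, e2]
  have hD : 0 < θ + (m * z + ((q:ℝ) - 1 - m)) := by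
    have : (0:ℝ) ≤ m * z := mul_nonneg (Nat.cast_nonneg m) hz.le
    nlinarith
  have hN : 0 < (θ - 1) * z + (m * z + ((q:ℝ) - 1 - m)) + 1 := by
    have h1 : (0:ℝ) ≤ m * z := mul_nonneg (Nat.cast_nonneg m) hz.le
    nlinarith
  have key : (z = (((θ - 1) * z + (m * z + ((q:ℝ) - 1 - m)) + 1) /
        (θ + (m * z + ((q:ℝ) - 1 - m)))) ^ 2) ↔
      (s = 1 ∨ (m : ℝ) * s ^ 2 - (θ - 1) * s + ((q : ℝ) - (m : ℝ)) = 0) := by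
    rw [div_pow, eq_div_iff (pow_ne_zero 2 hD.ne')]
    have e3 : z * (θ + (m * z + ((q:ℝ) - 1 - m))) ^ 2
        = (s * (θ + (m * z + ((q:ℝ) - 1 - m)))) ^ 2 := by
      rw [mul_pow, hsz]
    rw [e3, sq_eq_sq₀ (mul_nonneg hs0.le hD.le) hN.le, ← sub_eq_zero,
      show s * (θ + (m * z + ((q:ℝ) - 1 - m)))
          - ((θ - 1) * z + (m * z + ((q:ℝ) - 1 - m)) + 1)
        = (s - 1) * ((m : ℝ) * s ^ 2 - (θ - 1) * s + ((q : ℝ) - (m : ℝ)))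
        by rw [← hsz]; ring,
      mul_eq_zero, sub_eq_zero]
  have hz1 : z = 1 ↔ s = 1 := by
    constructor
    · intro h; rw [hs, h, Real.sqrt_one]
    · intro h; rw [← hsz, h, one_pow]
  simp only [hSum]
  constructor
  · intro h
    have h0 := h ⟨0, by omega⟩
    simp only [Fin.val_mk, if_pos (Nat.lt_of_lt_of_le Nat.zero_lt_one hm1)] at h0
    rcases key.mp h0 with h1 | h1
    · exact Or.inl (hz1.mpr h1)
    · exact Or.inr h1
  · intro h i
    by_cases hi : (i : ℕ) < m
    · rw [if_pos hi]
      exact key.mpr (h.imp hz1.mp id)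
    · rw [if_neg hi]
      rw [show (θ - 1) * 1 + (m * z + ((q:ℝ) - 1 - m)) + 1
          = θ + (m * z + ((q:ℝ) - 1 - m)) by ring, div_self hD.ne', one_pow]
end

section
/- For the translation-invariant BC h_x ≡ 0 on the Cayley tree of order k, the free energy equals E = −J − (1/β) ln(1 + (q−1) exp(Jqβ/(1−q))). -/
open scoped InnerProductSpace

theorem potts_free_energy_zero_bc (q : ℕ) (hq : 2 ≤ q) (J β : ℝ) (hβ : 0 < β)
    (σ : Fin q → EuclideanSpace ℝ (Fin (q - 1)))
    (hσ : ∀ i j : Fin q, ⟪σ i, σ j⟫_ℝ = if i = j then 1 else -1 / ((q : ℝ) - 1)) :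
    -((1 / ((q : ℝ) * β)) *
        ∑ i : Fin q, Real.log (∑ u : Fin q, Real.exp (J * β * ⟪σ i, σ u⟫_ℝ))) =
      -J - (1 / β) * Real.log (1 + ((q : ℝ) - 1) * Real.exp (J * q * β / (1 - q))) := by
  have hq2 : (2:ℝ) ≤ (q:ℝ) := by exact_mod_cast hq
  have hqne : (q:ℝ) - 1 ≠ 0 := by linarith
  have hqne' : (1:ℝ) - (q:ℝ) ≠ 0 := by linarith
  have hqpos : (0:ℝ) < q := by linarith
  set A : ℝ := Real.exp (J * β) with hA
  set e' : ℝ := Real.exp (J * q * β / (1 - q)) with he'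
  set X : ℝ := 1 + ((q:ℝ) - 1) * e' with hX
  have hXpos : 0 < X := by
    have : 0 < e' := Real.exp_pos _
    nlinarith
  have hB : Real.exp (J * β * (-1 / ((q:ℝ) - 1))) = A * e' := by
    rw [hA, he', ← Real.exp_add]
    congr 1
    field_simp
    ring
  have key : ∀ i : Fin q, ∑ u : Fin q, Real.exp (J * β * ⟪σ i, σ u⟫_ℝ) = A * X := by
    intro i
    have h1 : ∀ u : Fin q, Real.exp (J * β * ⟪σ i, σ u⟫_ℝ)
        = A * e' + (if i = u then A - A * e' else 0) := by
      intro u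
      rw [hσ]
      split_ifs with h
      · simp [hA]
      · rw [← hB]; ring_nf
    simp_rw [h1, Finset.sum_add_distrib, Finset.sum_ite_eq, Finset.mem_univ, if_pos,
      Finset.sum_const, Finset.card_univ, Fintype.card_fin, nsmul_eq_mul]
    rw [hX]; ring
  have hlog : ∀ i : Fin q, Real.log (∑ u : Fin q, Real.exp (J * β * ⟪σ i, σ u⟫_ℝ))
      = J * β + Real.log X := by
    intro i
    rw [key i, Real.log_mul (by positivity) (ne_of_gt hXpos), hA, Real.log_exp]
  rw [Finset.sum_congr rfl fun i _ => hlog i, Finset.sum_const, Finset.card_univ,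
    Fintype.card_fin, nsmul_eq_mul]
  field_simp
  ring
end
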